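/- arXiv:1512.01821 — 2 statements merged into one kernel-verified Lean document; each statement's English description precedes it below -/
import Mathlib

section
/- Let G be a connected graph with a total order on its edges. Then T_G(x̂, ŷ) = Σ_T x̂^{|Î(T)|} ŷ^{|L̂(T)|}, where the sum is over spanning trees T of G, Î(T) is the set of internally active edges of T, and L̂(T) is the set of externally active edges of T. -/
open scoped Classical

/-- A multigraph with a fixed reference orientation: each edge `e` has a
source `src e` and a target `tgt e` (the positive direction `e⁺ = (src e, tgt e)`). -/
structure RefGraph (V E : Type) where
  src : E → V
  tgt : E → V

namespace RefGraph

variable {V E : Type} (G : RefGraph V E)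

/-- Two vertices are joined by some edge of `S`. -/
def step (S : Set E) (a b : V) : Prop :=
  ∃ e ∈ S, (G.src e = a ∧ G.tgt e = b) ∨ (G.src e = b ∧ G.tgt e = a)

/-- `κ(S)`: the number of connected components of the spanning subgraph `(V, S)`. -/
noncomputable def kappa (S : Set E) : ℕ :=
  Nat.card (Quot (G.step S))

/-- A cut of `G`: a minimal nonempty edge set whose removal increases the
number of connected components. -/
def IsCut (C : Set E) : Prop :=
  C.Nonempty ∧ G.kappa Cᶜ > G.kappa Set.univ ∧
    ∀ C' : Set E, C' ⊂ C → C'.Nonempty → ¬ (G.kappa C'ᶜ > G.kappa Set.univ)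

/-- A cycle of `G`: a minimal nonempty edge set meeting no cut of `G` in
precisely one element. -/
def IsCycle (C : Set E) : Prop :=
  C.Nonempty ∧ (∀ Cu : Set E, G.IsCut Cu → (Cu ∩ C).ncard ≠ 1) ∧
    ∀ C' : Set E, C' ⊂ C → C'.Nonempty →
      ¬ (∀ Cu : Set E, G.IsCut Cu → (Cu ∩ C').ncard ≠ 1)

/-- Head of edge `e` under orientation `O` (`O e = true` means the reference
direction `src e → tgt e`). -/
def ohead (O : E → Bool) (e : E) : V := if O e then G.tgt e else G.src e

/-- Tail of edge `e` under orientation `O`. -/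
def otail (O : E → Bool) (e : E) : V := if O e then G.src e else G.tgt e

/-- Edge `e` crosses the vertex set `U` (exactly one endpoint in `U`). -/
def crossing (U : Set V) (e : E) : Prop := G.src e ∈ U ↔ G.tgt e ∉ U

/-- A directed cut of the orientation `O`: a cut all of whose edges are
oriented consistently out of some vertex set `U`. -/
def IsDirCut (O : E → Bool) (C : Set E) : Prop :=
  G.IsCut C ∧ ∃ U : Set V, (∀ e, e ∈ C ↔ G.crossing U e) ∧ ∀ e ∈ C, G.otail O e ∈ U

/-- A directed cycle of the orientation `O`: a cycle oriented consistently,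
i.e. in-degree equals out-degree at each vertex within the cycle. -/
def IsDirCycle (O : E → Bool) (C : Set E) : Prop :=
  G.IsCycle C ∧ ∀ v : V,
    {e ∈ C | G.ohead O e = v}.ncard = {e ∈ C | G.otail O e = v}.ncard

section Activities

variable [LinearOrder E]

/-- `Î(S)`: cut active edges of the spanning subgraph `S`. -/
def Iact (S : Set E) : Set E :=
  {e | ∃ C : Set E, G.IsCut C ∧ e ∈ C ∧ (∀ f ∈ C, f ≠ e → f ∉ S) ∧ ∀ f ∈ C, e ≤ f}

/-- `L̂(S)`: cycle active edges of the spanning subgraph `S`. -/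
def Lact (S : Set E) : Set E :=
  {e | ∃ C : Set E, G.IsCycle C ∧ e ∈ C ∧ (∀ f ∈ C, f = e ∨ f ∈ S) ∧ ∀ f ∈ C, e ≤ f}

/-- `I(O)`: cut active edges of the orientation `O`. -/
def Ior (O : E → Bool) : Set E :=
  {e | ∃ C : Set E, G.IsDirCut O C ∧ e ∈ C ∧ ∀ f ∈ C, e ≤ f}

/-- `L(O)`: cycle active edges of the orientation `O`. -/
def Lor (O : E → Bool) : Set E :=
  {e | ∃ C : Set E, G.IsDirCycle O C ∧ e ∈ C ∧ ∀ f ∈ C, e ≤ f}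

end Activities

/-- The Tutte polynomial via the corank-nullity expansion, evaluated in a
commutative ring. -/
noncomputable def tutte [Fintype V] [Fintype E] (R : Type) [CommRing R] (x y : R) : R :=
  ∑ S : Finset E, (x - 1) ^ (G.kappa ↑S - G.kappa Set.univ) *
    (y - 1) ^ (S.card + G.kappa ↑S - Fintype.card V)

/-! ### Fourientations.
A fourientation is `F : E → Bool × Bool`, recording whether `e⁺` resp. `e⁻`
belongs to the fourientation. -/

/-- A potential cut of the fourientation `F`: a directed cut each of whose
edges is unoriented in `F` or oriented in the cut direction (out of `U`). -/
def PotCut (F : E → Bool × Bool) (C : Set E) : Prop :=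
  G.IsCut C ∧ ∃ U : Set V, (∀ e, e ∈ C ↔ G.crossing U e) ∧
    ∀ e ∈ C, (G.src e ∈ U → (F e).2 = false) ∧ (G.src e ∉ U → (F e).1 = false)

/-- A potential cycle of the fourientation `F`, with cyclic direction `dir`:
a consistently directed cycle each of whose edges has its `dir`-direction
present in `F` (so each edge is bioriented or oriented in the cycle direction). -/
def PotCycle (F : E → Bool × Bool) (C : Set E) (dir : E → Bool) : Prop :=
  G.IsCycle C ∧
    (∀ v : V, {e ∈ C | G.ohead dir e = v}.ncard = {e ∈ C | G.otail dir e = v}.ncard) ∧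
    ∀ e ∈ C, (if dir e then (F e).1 else (F e).2) = true

/-- Add the direction `d` of edge `e` to the fourientation `F`. -/
def addDir [DecidableEq E] (F : E → Bool × Bool) (e : E) (d : Bool) : E → Bool × Bool :=
  Function.update F e (if d then (true, (F e).2) else ((F e).1, true))

/-- Remove the direction `d` of edge `e` from the fourientation `F`. -/
def remDir [DecidableEq E] (F : E → Bool × Bool) (e : E) (d : Bool) : E → Bool × Bool :=
  Function.update F e (if d then (false, (F e).2) else ((F e).1, false))

/-- `ᵉO`: toggle the status of the edge `e` in the fourientation `F`. -/
def toggle [DecidableEq E] (F : E → Bool × Bool) (e : E) : E → Bool × Bool :=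
  Function.update F e ((F e).2, (F e).1)

section FourActivities

variable [LinearOrder E]

/-- `I^o(O)`: oriented edges that are minimal in some potential cut. -/
def Io (F : E → Bool × Bool) : Set E :=
  {f | (F f).1 ≠ (F f).2 ∧ ∃ C : Set E, G.PotCut F C ∧ f ∈ C ∧ ∀ g ∈ C, f ≤ g}

/-- `L^o(O)`: oriented edges that are minimal in some potential cycle. -/
def Lo (F : E → Bool × Bool) : Set E :=
  {f | (F f).1 ≠ (F f).2 ∧
    ∃ (C : Set E) (dir : E → Bool), G.PotCycle F C dir ∧ f ∈ C ∧ ∀ g ∈ C, f ≤ g}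

/-- `I^u(O)`: unoriented edges `f` minimal in some potential cut of
`O ∪ {f^{σᵤ(f)}}`. -/
def Iu (σu : E → Bool) (F : E → Bool × Bool) : Set E :=
  {f | F f = (false, false) ∧
    ∃ C : Set E, G.PotCut (addDir F f (σu f)) C ∧ f ∈ C ∧ ∀ g ∈ C, f ≤ g}

/-- `L^b(O)`: bioriented edges `f` minimal in some potential cycle of
`O \ {f^{σ_b(f)}}`. -/
def Lb (σb : E → Bool) (F : E → Bool × Bool) : Set E :=
  {f | F f = (true, true) ∧
    ∃ (C : Set E) (dir : E → Bool),
      G.PotCycle (remDir F f (σb f)) C dir ∧ f ∈ C ∧ ∀ g ∈ C, f ≤ g}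

end FourActivities

/-- The deletion `G − e`. -/
def del (e : E) : RefGraph V {f : E // f ≠ e} :=
  ⟨fun f => G.src f.1, fun f => G.tgt f.1⟩

/-- The contraction `G/e`: identify the endpoints of `e` and remove `e`. -/
def contr (e : E) : RefGraph (Quot (fun a b => a = G.src e ∧ b = G.tgt e)) {f : E // f ≠ e} :=
  ⟨fun f => Quot.mk _ (G.src f.1), fun f => Quot.mk _ (G.tgt f.1)⟩

/-! ### Potential walks in a fourientation. A walk step is a pair `(e, d)` of an
edge and a chosen direction (`d = true` for the reference direction). -/

/-- Tail of the directed edge `(e, d)`. -/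
def ftail (p : E × Bool) : V := if p.2 then G.src p.1 else G.tgt p.1

/-- Head of the directed edge `(e, d)`. -/
def fhead (p : E × Bool) : V := if p.2 then G.tgt p.1 else G.src p.1

/-- The direction `d` of `e` is present in the fourientation `F`. -/
def present (F : E → Bool × Bool) (p : E × Bool) : Prop :=
  (if p.2 then (F p.1).1 else (F p.1).2) = true

/-- A potential walk of the fourientation `F` from `a` to `b`: each step uses
a direction present in `F` (so each edge is bioriented or oriented
consistently with the walk). -/
def IsPWalk (F : E → Bool × Bool) : V → List (E × Bool) → V → Prop
  | a, [], b => a = b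
  | a, p :: rest, b => G.ftail p = a ∧ present F p ∧ IsPWalk F (G.fhead p) rest b

/-- A potential path: a potential walk visiting pairwise distinct vertices. -/
def IsPPath (F : E → Bool × Bool) (a : V) (w : List (E × Bool)) (b : V) : Prop :=
  G.IsPWalk F a w b ∧ (a :: w.map G.fhead).Nodup

end RefGraph

/-!
The subsets of `E` are partitioned into the intervals `[T \ Î(T), T ∪ L̂(T)]`, `T` a spanning
tree (Crapo). Given `S`, take a spanning tree `T` of minimum weight for a weight favouring the
edges of `S`, the larger the better, and among the other edges the smaller the better.
Exchanging along fundamental cycles and cuts shows that every edge of `S \ T` is least on its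
fundamental cycle and every edge of `T \ S` least on its fundamental cut, i.e. `S` lies in the
interval of `T`. The tree is unique, since the largest edge in which two such trees differ would
have to be followed by a larger one. On the interval of `T`, `κ(S) - 1 = |T \ S|` and
`|S| + κ(S) - |V| = |S \ T|`, so by the binomial theorem the interval contributes
`x ^ |Î(T)| * y ^ |L̂(T)|` to the corank-nullity sum.

Cycles and cuts enter through one fact: an edge set meets no cut in exactly one edge iff it
has no bridge, so the cycles are the minimal nonempty bridgeless edge sets.
-/

theorem Finset.sum_pow_card_sdiff_mul_pow_card_sdiff {ι R : Type*} [Fintype ι] [DecidableEq ι]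
    [CommSemiring R] {T I L : Finset ι} (hI : I ⊆ T) (hL : Disjoint L T) (a b : R) :
    ∑ S with S \ T ⊆ L ∧ T \ S ⊆ I, a ^ (T \ S).card * b ^ (S \ T).card =
      (a + 1) ^ I.card * (b + 1) ^ L.card := by
  calc ∑ S with S \ T ⊆ L ∧ T \ S ⊆ I, a ^ (T \ S).card * b ^ (S \ T).card
      = ∑ p ∈ I.powerset ×ˢ L.powerset, a ^ p.1.card * b ^ p.2.card := by
        refine Finset.sum_nbij' (fun S => (T \ S, S \ T)) (fun p => (T \ p.1) ∪ p.2)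
          ?_ ?_ ?_ ?_ fun _ _ => rfl
        · intro S hS
          simp_all
        · rintro ⟨A, B⟩ hAB
          simp only [Finset.mem_product, Finset.mem_powerset] at hAB
          rw [Finset.mem_filter_univ]
          refine ⟨fun x hx => ?_, fun x hx => ?_⟩ <;>
            simp only [Finset.mem_sdiff, Finset.mem_union] at hx
          · exact hAB.2 (hx.1.resolve_left fun h => hx.2 h.1)
          · exact hAB.1 (by tauto)
        · intro S hS
          ext x
          simp only [Finset.mem_union, Finset.mem_sdiff]
          tauto
        · rintro ⟨A, B⟩ hAB
          simp only [Finset.mem_product, Finset.mem_powerset] at hAB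
          have hA : ∀ x ∈ A, x ∈ T := fun x hx => hI (hAB.1 hx)
          have hB : ∀ x ∈ B, x ∉ T := fun x hx => Finset.disjoint_left.1 hL (hAB.2 hx)
          ext x <;> simp only [Finset.mem_sdiff, Finset.mem_union] <;> grind
    _ = (∑ A ∈ I.powerset, a ^ A.card) * ∑ B ∈ L.powerset, b ^ B.card := by
        rw [Finset.sum_product, Finset.sum_mul_sum]
    _ = (a + 1) ^ I.card * (b + 1) ^ L.card := by
        simp [← Finset.sum_pow_mul_eq_add_pow]

namespace RefGraph

variable {V E : Type} (G : RefGraph V E)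

def Reachable (S : Set E) (a b : V) : Prop :=
  Quot.mk (G.step S) a = Quot.mk (G.step S) b

def IsForest (S : Set E) : Prop :=
  ∀ e ∈ S, ¬ G.Reachable (S \ {e}) (G.src e) (G.tgt e)

def IsBridgeless (S : Set E) : Prop :=
  ∀ e ∈ S, G.Reachable (S \ {e}) (G.src e) (G.tgt e)

def IsSpanningTree (T : Set E) : Prop :=
  G.kappa T = 1 ∧ G.IsForest T

def cutOf (U : Set V) : Set E :=
  {e | G.crossing U e}

variable {G}

instance (S : Set E) : Std.Symm (G.step S) :=
  ⟨fun _ _ ⟨e, he, h⟩ => ⟨e, he, h.symm⟩⟩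

theorem reachable_iff_reflTransGen {S : Set E} {a b : V} :
    G.Reachable S a b ↔ Relation.ReflTransGen (G.step S) a b := by
  rw [Reachable, Quot.eq, Relation.EqvGen.eqvGen_eq_reflTransGen]

theorem Reachable.symm {S : Set E} {a b : V} (h : G.Reachable S a b) : G.Reachable S b a :=
  Eq.symm h

theorem Reachable.trans {S : Set E} {a b c : V} (h : G.Reachable S a b)
    (h' : G.Reachable S b c) : G.Reachable S a c :=
  Eq.trans h h'

theorem reachable_of_mem {S : Set E} {e : E} (he : e ∈ S) :
    G.Reachable S (G.src e) (G.tgt e) :=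
  Quot.sound ⟨e, he, Or.inl ⟨rfl, rfl⟩⟩

theorem Reachable.of_forall_reachable {S S' : Set E}
    (hS : ∀ e ∈ S, G.Reachable S' (G.src e) (G.tgt e)) {a b : V} (h : G.Reachable S a b) :
    G.Reachable S' a b := by
  rw [reachable_iff_reflTransGen] at h
  induction h with
  | refl => rfl
  | tail _ hstep ih =>
    obtain ⟨e, he, ⟨rfl, rfl⟩ | ⟨rfl, rfl⟩⟩ := hstep
    · exact ih.trans (hS e he)
    · exact ih.trans (hS e he).symm

theorem Reachable.mono {S S' : Set E} (hSS' : S ⊆ S') {a b : V} (h : G.Reachable S a b) :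
    G.Reachable S' a b :=
  h.of_forall_reachable fun _ he => reachable_of_mem (hSS' he)

theorem reachable_insert_iff {S : Set E} {e : E} {a b : V} :
    G.Reachable (insert e S) a b ↔ G.Reachable S a b ∨
      (G.Reachable S a (G.src e) ∧ G.Reachable S (G.tgt e) b) ∨
      (G.Reachable S a (G.tgt e) ∧ G.Reachable S (G.src e) b) := by
  constructor
  · intro h
    rw [reachable_iff_reflTransGen] at h
    induction h with
    | refl => exact Or.inl rfl
    | @tail x y _ hstep ih =>
      obtain ⟨f, hf, hxy⟩ := hstep
      rcases Set.mem_insert_iff.1 hf with rfl | hfS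
      · rcases hxy with ⟨rfl, rfl⟩ | ⟨rfl, rfl⟩ <;>
          rcases ih with h | ⟨h, -⟩ | ⟨h, -⟩ <;> simp_all [Reachable]
      · have hxy' : G.Reachable S x y := Quot.sound ⟨f, hfS, hxy⟩
        rcases ih with h | ⟨h, h'⟩ | ⟨h, h'⟩
        · exact Or.inl (h.trans hxy')
        · exact Or.inr (Or.inl ⟨h, h'.trans hxy'⟩)
        · exact Or.inr (Or.inr ⟨h, h'.trans hxy'⟩)
  · have hsub := Set.subset_insert e S
    have he := reachable_of_mem (G := G) (Set.mem_insert e S)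
    rintro (h | ⟨h, h'⟩ | ⟨h, h'⟩)
    · exact h.mono hsub
    · exact (h.mono hsub).trans (he.trans (h'.mono hsub))
    · exact (h.mono hsub).trans (he.symm.trans (h'.mono hsub))

theorem reachable_sdiff_singleton_iff {S : Set E} {e : E} (he : e ∈ S) {a b : V} :
    G.Reachable S a b ↔ G.Reachable (S \ {e}) a b ∨
      (G.Reachable (S \ {e}) a (G.src e) ∧ G.Reachable (S \ {e}) (G.tgt e) b) ∨
      (G.Reachable (S \ {e}) a (G.tgt e) ∧ G.Reachable (S \ {e}) (G.src e) b) := by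
  rw [← reachable_insert_iff, Set.insert_sdiff_singleton, Set.insert_eq_of_mem he]

theorem Reachable.mem_iff_of_forall_not_crossing {S : Set E} {U : Set V}
    (hS : ∀ e ∈ S, ¬ G.crossing U e) {a b : V} (h : G.Reachable S a b) : a ∈ U ↔ b ∈ U := by
  rw [reachable_iff_reflTransGen] at h
  induction h with
  | refl => rfl
  | tail _ hstep ih =>
    obtain ⟨e, he, ⟨rfl, rfl⟩ | ⟨rfl, rfl⟩⟩ := hstep
    · have := hS e he; unfold crossing at this; tauto
    · have := hS e he; unfold crossing at this; tauto

theorem not_reachable_insert_sdiff_singleton {T : Set E} {y f : E} (hy : y ∈ T)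
    (hbr : ¬ G.Reachable (T \ {y}) (G.src y) (G.tgt y))
    (hf : ¬ G.Reachable T (G.src f) (G.tgt f)) :
    ¬ G.Reachable (insert f T \ {y}) (G.src y) (G.tgt y) := by
  intro h
  have hsub : T \ {y} ⊆ T := Set.sdiff_subset
  have hy' := reachable_of_mem (G := G) hy
  rcases reachable_insert_iff.1 (h.mono (Set.insert_sdiff_subset (t := {y}))) with
    h | ⟨h₁, h₂⟩ | ⟨h₁, h₂⟩
  · exact hbr h
  · exact hf ((h₁.mono hsub).symm.trans (hy'.trans (h₂.mono hsub).symm))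
  · exact hf ((h₂.mono hsub).trans (hy'.symm.trans (h₁.mono hsub)))

theorem reachable_sdiff_singleton_iff_of_reachable {S : Set E} {c : E}
    (hc : G.Reachable (S \ {c}) (G.src c) (G.tgt c)) {a b : V} :
    G.Reachable (S \ {c}) a b ↔ G.Reachable S a b := by
  refine ⟨Reachable.mono Set.sdiff_subset, Reachable.of_forall_reachable fun f hf => ?_⟩
  rcases eq_or_ne f c with rfl | hfc
  exacts [hc, reachable_of_mem ⟨hf, hfc⟩]

section Kappa

theorem nonempty_of_kappa_univ (hconn : G.kappa Set.univ = 1) : Nonempty V := by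
  obtain ⟨-, ⟨⟨v⟩⟩⟩ := Nat.card_eq_one_iff_unique.1 hconn
  exact ⟨v⟩

theorem kappa_eq_one_iff [Nonempty V] {S : Set E} :
    G.kappa S = 1 ↔ ∀ a b : V, G.Reachable S a b := by
  rw [kappa, Nat.card_eq_one_iff_unique]
  refine ⟨fun ⟨h, _⟩ a b => h.elim _ _, fun h => ⟨⟨?_⟩, ⟨Quot.mk _ (Classical.arbitrary V)⟩⟩⟩
  rintro ⟨a⟩ ⟨b⟩
  exact h a b

theorem IsForest.mono {S S' : Set E} (h : G.IsForest S) (hS' : S' ⊆ S) : G.IsForest S' :=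
  fun e he hr => h e (hS' he) (hr.mono (Set.sdiff_subset_sdiff_left hS'))

variable [Fintype V]

theorem kappa_le_of_forall_reachable {S S' : Set E}
    (h : ∀ e ∈ S', G.Reachable S (G.src e) (G.tgt e)) : G.kappa S ≤ G.kappa S' := by
  refine Nat.card_le_card_of_surjective
    (Quot.lift (Quot.mk (G.step S)) fun a b ⟨e, he, hab⟩ => ?_) ?_
  · rcases hab with ⟨rfl, rfl⟩ | ⟨rfl, rfl⟩
    exacts [h e he, (h e he).symm]
  · rintro ⟨a⟩
    exact ⟨Quot.mk _ a, rfl⟩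

theorem kappa_anti {S S' : Set E} (h : S ⊆ S') : G.kappa S' ≤ G.kappa S :=
  kappa_le_of_forall_reachable fun _ he => reachable_of_mem (h he)

theorem kappa_insert_of_reachable {S : Set E} {e : E}
    (h : G.Reachable S (G.src e) (G.tgt e)) : G.kappa (insert e S) = G.kappa S := by
  refine le_antisymm (kappa_anti (Set.subset_insert e S))
    (kappa_le_of_forall_reachable fun f hf => ?_)
  rcases Set.mem_insert_iff.1 hf with rfl | hf
  exacts [h, reachable_of_mem hf]

theorem kappa_sdiff_singleton_of_reachable {S : Set E} {e : E} (he : e ∈ S)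
    (h : G.Reachable (S \ {e}) (G.src e) (G.tgt e)) : G.kappa (S \ {e}) = G.kappa S := by
  rw [← kappa_insert_of_reachable h, Set.insert_sdiff_singleton, Set.insert_eq_of_mem he]

theorem kappa_insert_add_one_of_not_reachable {S : Set E} {e : E}
    (h : ¬ G.Reachable S (G.src e) (G.tgt e)) : G.kappa (insert e S) + 1 = G.kappa S := by
  set t : Quot (G.step S) := Quot.mk _ (G.tgt e)
  let π : Quot (G.step S) → Quot (G.step (insert e S)) :=
    Quot.map id fun _ _ ⟨f, hf, hab⟩ => ⟨f, Set.mem_insert_of_mem _ hf, hab⟩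
  have hπ : ∀ x y, π x = π y → x ≠ t → y ≠ t → x = y := by
    rintro ⟨a⟩ ⟨b⟩ hab ha hb
    rcases reachable_insert_iff.1 hab with h' | ⟨-, h'⟩ | ⟨h', -⟩
    · exact h'
    · exact absurd h'.symm hb
    · exact absurd h' ha
  let ι : Quot (G.step S) → Option (Quot (G.step (insert e S))) :=
    fun x => if x = t then none else some (π x)
  have hι : Function.Bijective ι := by
    refine ⟨fun x y hxy => ?_, fun o => ?_⟩
    · by_cases hx : x = t <;> by_cases hy : y = t <;> simp only [ι, hx, hy, if_true,
        if_false, reduceCtorEq, Option.some_inj] at hxy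
      exacts [hx.trans hy.symm, hπ x y hxy hx hy]
    · rcases o with _ | ⟨⟨a⟩⟩
      · exact ⟨t, if_pos rfl⟩
      by_cases ha : Quot.mk (G.step S) a = t
      · have hs : Quot.mk (G.step S) (G.src e) ≠ t := h
        exact ⟨_, (if_neg hs).trans (congrArg some
          ((reachable_of_mem (G := G) (Set.mem_insert e S)).trans (congrArg π ha).symm))⟩
      · exact ⟨_, if_neg ha⟩
  rw [kappa, kappa, ← Finite.card_option, Nat.card_congr (Equiv.ofBijective ι hι)]

theorem kappa_le_kappa_insert_add_one (S : Set E) (e : E) :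
    G.kappa S ≤ G.kappa (insert e S) + 1 := by
  by_cases h : G.Reachable S (G.src e) (G.tgt e)
  · rw [kappa_insert_of_reachable h]
    omega
  · exact (kappa_insert_add_one_of_not_reachable h).ge

theorem kappa_empty : G.kappa ∅ = Fintype.card V := by
  have hinj : Function.Injective (Quot.mk (G.step ∅)) := fun a b hab => by
    have := reachable_iff_reflTransGen.1 hab
    rcases this.cases_head with h | ⟨_, ⟨_, he, _⟩, _⟩
    exacts [h, absurd he (Set.notMem_empty _)]
  rw [kappa, ← Nat.card_eq_fintype_card,
    Nat.card_congr (Equiv.ofBijective _ ⟨hinj, Quot.mk_surjective⟩)]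

theorem one_le_kappa [Nonempty V] (S : Set E) : 1 ≤ G.kappa S :=
  have : Nonempty (Quot (G.step S)) := ⟨Quot.mk _ (Classical.arbitrary V)⟩
  Nat.card_pos

theorem two_le_kappa_of_not_reachable {S : Set E} {a b : V} (h : ¬ G.Reachable S a b) :
    2 ≤ G.kappa S :=
  Finite.one_lt_card_iff_nontrivial.2 ⟨_, _, h⟩

theorem card_le_kappa_add_ncard [Finite E] (S : Set E) :
    Fintype.card V ≤ G.kappa S + S.ncard := by
  induction S, S.toFinite using Set.Finite.induction_on with
  | empty => simp [kappa_empty]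
  | @insert e S he hS ih =>
    rw [Set.ncard_insert_of_notMem he hS]
    have := kappa_le_kappa_insert_add_one (G := G) S e
    omega

theorem isForest_iff_kappa_add_ncard [Finite E] {S : Set E} :
    G.IsForest S ↔ G.kappa S + S.ncard = Fintype.card V := by
  constructor
  · induction S, S.toFinite using Set.Finite.induction_on with
    | empty => simp [kappa_empty]
    | @insert e S he hS ih =>
      intro hF
      have hbridge := hF e (Set.mem_insert e S)
      rw [Set.insert_sdiff_self_of_notMem he] at hbridge
      rw [Set.ncard_insert_of_notMem he hS, ← ih (hF.mono (Set.subset_insert e S)),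
        ← kappa_insert_add_one_of_not_reachable hbridge]
      omega
  · intro hS e he hr
    have hk := kappa_sdiff_singleton_of_reachable he hr
    have hn : (S \ {e}).ncard + 1 = S.ncard := Set.ncard_sdiff_singleton_add_one he
    have := card_le_kappa_add_ncard (G := G) (S \ {e})
    omega

theorem exists_not_reachable_of_kappa_ne_one (hconn : G.kappa Set.univ = 1) {S : Set E}
    (h : G.kappa S ≠ 1) : ∃ e, ¬ G.Reachable S (G.src e) (G.tgt e) := by
  have := nonempty_of_kappa_univ hconn
  by_contra! hS
  have := kappa_le_of_forall_reachable fun e (_ : e ∈ Set.univ) => hS e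
  have := one_le_kappa (G := G) S
  omega

end Kappa

section Cuts

theorem crossing_iff {U : Set V} {e : E} :
    G.crossing U e ↔ ¬ (G.src e ∈ U ↔ G.tgt e ∈ U) := by
  unfold crossing
  tauto

theorem reachable_insert_of_crossing {A : Set E} {U : Set V}
    (hU : ∀ u ∈ U, ∀ u' ∈ U, G.Reachable A u u')
    (hUc : ∀ v ∉ U, ∀ v' ∉ U, G.Reachable A v v')
    {c : E} (hc : G.crossing U c) (a b : V) : G.Reachable (insert c A) a b := by
  have hsub := Set.subset_insert c A
  have hcc := reachable_of_mem (G := G) (Set.mem_insert c A)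
  suffices ∀ w, G.Reachable (insert c A) w (G.src c) from (this a).trans (this b).symm
  intro w
  unfold crossing at hc
  by_cases hw : w ∈ U <;> by_cases hs : G.src c ∈ U
  · exact (hU w hw _ hs).mono hsub
  · exact ((hU w hw _ (by tauto)).mono hsub).trans hcc.symm
  · exact ((hUc w hw _ (by tauto)).mono hsub).trans hcc.symm
  · exact (hUc w hw _ hs).mono hsub

variable [Fintype V]

theorem isCut_cutOf (hconn : G.kappa Set.univ = 1) {U : Set V}
    (hU : ∀ u ∈ U, ∀ u' ∈ U, G.Reachable (G.cutOf U)ᶜ u u')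
    (hUc : ∀ v ∉ U, ∀ v' ∉ U, G.Reachable (G.cutOf U)ᶜ v v')
    {u v : V} (hu : u ∈ U) (hv : v ∉ U) : G.IsCut (G.cutOf U) := by
  have : Nonempty V := ⟨u⟩
  have hsplit : 1 < G.kappa (G.cutOf U)ᶜ :=
    two_le_kappa_of_not_reachable fun h =>
      hv ((h.mem_iff_of_forall_not_crossing fun _ he => he).1 hu)
  refine ⟨?_, by rwa [hconn], fun C' hC' _ => ?_⟩
  · by_contra hempty
    rw [Set.not_nonempty_iff_eq_empty.1 hempty, Set.compl_empty, hconn] at hsplit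
    exact lt_irrefl _ hsplit
  · obtain ⟨c, hc, hcC'⟩ := Set.exists_of_ssubset hC'
    have hsub : insert c (G.cutOf U)ᶜ ⊆ C'ᶜ :=
      Set.insert_subset hcC' (Set.compl_subset_compl.2 hC'.1)
    have := kappa_anti (G := G) hsub
    rw [kappa_eq_one_iff.2 (reachable_insert_of_crossing hU hUc hc)] at this
    omega

theorem IsCut.exists_eq_cutOf (hconn : G.kappa Set.univ = 1) {D : Set E} (hD : G.IsCut D) :
    ∃ U, D = G.cutOf U := by
  have := nonempty_of_kappa_univ hconn
  obtain ⟨d₀, hd₀⟩ := hD.1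
  have hins : ∀ d ∈ D, G.kappa (insert d Dᶜ) = 1 := by
    intro d hd
    have hcompl : (D \ {d})ᶜ = insert d Dᶜ := by
      rw [Set.compl_sdiff, Set.union_comm, Set.union_singleton]
    rcases (D \ {d}).eq_empty_or_nonempty with h | h
    · rw [← hcompl, h, Set.compl_empty, hconn]
    · have := hD.2.2 _ (Set.sdiff_singleton_ssubset.2 hd) h
      have := one_le_kappa (G := G) (insert d Dᶜ)
      rw [hcompl, hconn] at *
      omega
  have hsep : ∀ d ∈ D, ¬ G.Reachable Dᶜ (G.src d) (G.tgt d) := fun d hd hr => by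
    have := hD.2.1
    rw [← kappa_insert_of_reachable hr, hins d hd, hconn] at this
    exact lt_irrefl _ this
  have hends : ∀ w, G.Reachable Dᶜ w (G.src d₀) ∨ G.Reachable Dᶜ w (G.tgt d₀) := fun w => by
    rcases reachable_insert_iff.1 (kappa_eq_one_iff.1 (hins d₀ hd₀) w (G.src d₀)) with
      h | ⟨h, -⟩ | ⟨h, -⟩
    exacts [Or.inl h, Or.inl h, Or.inr h]
  refine ⟨{w | G.Reachable Dᶜ w (G.src d₀)}, Set.ext fun e => ⟨fun he => ?_, fun he => ?_⟩⟩
  · refine ⟨fun hs ht => hsep e he (hs.trans ht.symm), fun ht => ?_⟩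
    rcases hends (G.src e) with h | h
    · exact h
    · exact absurd (h.trans ((hends (G.tgt e)).resolve_left ht).symm) (hsep e he)
  · by_contra heD
    have hr := reachable_of_mem (G := G) (Set.mem_compl heD)
    exact crossing_iff.1 he ⟨fun h => hr.symm.trans h, fun h => hr.trans h⟩

theorem IsCut.inter_nonempty (hconn : G.kappa Set.univ = 1) {D T : Set E} (hD : G.IsCut D)
    (hT : G.kappa T = 1) : (D ∩ T).Nonempty := by
  by_contra h
  have hsub : T ⊆ Dᶜ := fun e he heD => h ⟨e, heD, he⟩
  have := kappa_anti (G := G) hsub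
  have := hD.2.1
  omega

theorem mem_of_mem_Iact [LinearOrder E] (hconn : G.kappa Set.univ = 1) {T : Set E}
    (hT : G.kappa T = 1) {e : E} (he : e ∈ G.Iact T) : e ∈ T := by
  obtain ⟨D, hD, -, hDT, -⟩ := he
  obtain ⟨f, hfD, hfT⟩ := hD.inter_nonempty hconn hT
  by_contra heT
  exact hDT f hfD (fun h => heT (h ▸ hfT)) hfT

theorem exists_isCut_inter_eq_singleton (hconn : G.kappa Set.univ = 1) {T : Set E}
    (hT : G.kappa T = 1) {e : E} (he : e ∈ T)
    (hbr : ¬ G.Reachable (T \ {e}) (G.src e) (G.tgt e)) :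
    ∃ D, G.IsCut D ∧ e ∈ D ∧ D ∩ T = {e} ∧ ∀ d ∈ D, G.kappa (insert d (T \ {e})) = 1 := by
  have : Nonempty V := ⟨G.src e⟩
  set U : Set V := {w | G.Reachable (T \ {e}) w (G.src e)}
  have hU : ∀ u ∈ U, ∀ u' ∈ U, G.Reachable (T \ {e}) u u' := fun u hu u' hu' => hu.trans hu'.symm
  have hUc : ∀ v ∉ U, ∀ v' ∉ U, G.Reachable (T \ {e}) v v' := by
    have key : ∀ v ∉ U, G.Reachable (T \ {e}) v (G.tgt e) := fun v hv => by
      rcases (reachable_sdiff_singleton_iff he).1 (kappa_eq_one_iff.1 hT v (G.src e)) with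
        h | ⟨h, -⟩ | ⟨h, -⟩
      exacts [absurd h hv, absurd h hv, h]
    exact fun v hv v' hv' => (key v hv).trans (key v' hv').symm
  have hnc : T \ {e} ⊆ (G.cutOf U)ᶜ := fun f hf hcr =>
    crossing_iff.1 hcr ⟨fun h => (reachable_of_mem hf).symm.trans h,
      fun h => (reachable_of_mem hf).trans h⟩
  have heU : G.crossing U e := ⟨fun _ h => hbr h.symm, fun _ => rfl⟩
  refine ⟨G.cutOf U, isCut_cutOf hconn (fun u hu u' hu' => (hU u hu u' hu').mono hnc)
    (fun v hv v' hv' => (hUc v hv v' hv').mono hnc) (rfl : G.src e ∈ U) (fun h => hbr h.symm),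
    heU, ?_, fun d hd => kappa_eq_one_iff.2 (reachable_insert_of_crossing hU hUc hd)⟩
  refine Set.eq_singleton_iff_unique_mem.2 ⟨⟨heU, he⟩, fun f ⟨hfD, hfT⟩ => ?_⟩
  by_contra hfe
  exact hnc ⟨hfT, hfe⟩ hfD

end Cuts

section Cycles

variable [Fintype V] [Finite E]

theorem exists_connected_superset_of_not_reachable (hconn : G.kappa Set.univ = 1) {X : Set E}
    {y : E} (hy : y ∈ X) (hbr : ¬ G.Reachable (X \ {y}) (G.src y) (G.tgt y)) :
    ∃ T, X ⊆ T ∧ G.kappa T = 1 ∧ ¬ G.Reachable (T \ {y}) (G.src y) (G.tgt y) := by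
  obtain ⟨T, hXT, hT⟩ := exists_maximal_ge_of_wellFoundedGT
    (fun T => X ⊆ T ∧ ¬ G.Reachable (T \ {y}) (G.src y) (G.tgt y)) X ⟨subset_rfl, hbr⟩
  refine ⟨T, hXT, by_contra fun hk => ?_, hT.prop.2⟩
  obtain ⟨f, hf⟩ := exists_not_reachable_of_kappa_ne_one hconn hk
  have hfT := hT.le_of_ge ⟨hXT.trans (Set.subset_insert f T),
    not_reachable_insert_sdiff_singleton (hXT hy) hT.prop.2 hf⟩ (Set.subset_insert f T)
  exact hf (reachable_of_mem (hfT (Set.mem_insert f T)))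

theorem forall_isCut_inter_ncard_ne_one_iff (hconn : G.kappa Set.univ = 1) {C : Set E} :
    (∀ D, G.IsCut D → (D ∩ C).ncard ≠ 1) ↔ G.IsBridgeless C := by
  refine ⟨fun h e he => by_contra fun hbr => ?_, fun hC D hD hone => ?_⟩
  · obtain ⟨T, hCT, hT, hbrT⟩ := exists_connected_superset_of_not_reachable hconn he hbr
    obtain ⟨D, hD, heD, hDT, -⟩ := exists_isCut_inter_eq_singleton hconn hT (hCT he) hbrT
    refine h D hD (Set.ncard_eq_one.2 ⟨e, Set.Subset.antisymm (fun f hf => ?_) ?_⟩)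
    · exact hDT ▸ ⟨hf.1, hCT hf.2⟩
    · exact Set.singleton_subset_iff.2 ⟨heD, he⟩
  · obtain ⟨b, hb⟩ := Set.ncard_eq_one.1 hone
    obtain ⟨U, rfl⟩ := hD.exists_eq_cutOf hconn
    have hbD : b ∈ G.cutOf U ∩ C := hb ▸ rfl
    have hsub : C \ {b} ⊆ (G.cutOf U)ᶜ := fun f hf hfD => hf.2 (hb ▸ ⟨hfD, hf.1⟩ : f ∈ {b})
    exact crossing_iff.1 hbD.1 (((hC b hbD.2).mono hsub).mem_iff_of_forall_not_crossing
      fun _ he => he)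

theorem isCycle_iff (hconn : G.kappa Set.univ = 1) {C : Set E} :
    G.IsCycle C ↔ Minimal (fun X => X.Nonempty ∧ G.IsBridgeless X) C := by
  simp only [IsCycle, forall_isCut_inter_ncard_ne_one_iff hconn, Set.minimal_iff_forall_ssubset,
    not_and, and_assoc]

theorem IsCycle.isBridgeless (hconn : G.kappa Set.univ = 1) {C : Set E} (hC : G.IsCycle C) :
    G.IsBridgeless C :=
  ((isCycle_iff hconn).1 hC).prop.2

theorem exists_isCycle_of_reachable (hconn : G.kappa Set.univ = 1) {S : Set E} {e : E}
    (he : e ∈ S) (hr : G.Reachable (S \ {e}) (G.src e) (G.tgt e)) :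
    ∃ C ⊆ S, e ∈ C ∧ G.IsCycle C := by
  obtain ⟨X, hXS, hX⟩ := exists_minimal_le_of_wellFoundedLT
    (fun X => e ∈ X ∧ G.Reachable (X \ {e}) (G.src e) (G.tgt e)) S ⟨he, hr⟩
  have heX := hX.prop.1
  have hmin : ∀ c ∈ X \ {e}, ¬ G.Reachable ((X \ {e}) \ {c}) (G.src e) (G.tgt e) := by
    rintro c ⟨hcX, hce⟩ h
    have hle := hX.le_of_le (y := X \ {c}) ⟨⟨heX, fun h' => hce h'.symm⟩,
      by rwa [Set.sdiff_sdiff_comm]⟩ Set.sdiff_subset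
    exact (hle hcX).2 rfl
  refine ⟨X, hXS, heX, (isCycle_iff hconn).2 ⟨⟨⟨e, heX⟩, fun c hc => ?_⟩, ?_⟩⟩
  · rcases eq_or_ne c e with rfl | hce
    · exact hX.prop.2
    by_contra hbr
    have hsub : (X \ {e}) \ {c} ⊆ X \ {c} := Set.sdiff_subset_sdiff_left Set.sdiff_subset
    have hee := reachable_of_mem (G := G) (S := X \ {c}) ⟨heX, hce.symm⟩
    have hcX : c ∈ X \ {e} := ⟨hc, hce⟩
    rcases (reachable_sdiff_singleton_iff hcX).1 hX.prop.2 with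
      h | ⟨h₁, h₂⟩ | ⟨h₁, h₂⟩
    · exact hmin c hcX h
    · exact hbr ((h₁.mono hsub).symm.trans (hee.trans (h₂.mono hsub).symm))
    · exact hbr ((h₂.mono hsub).trans (hee.symm.trans (h₁.mono hsub)))
  · rintro C' ⟨⟨c, hc⟩, hC'⟩ hC'X
    by_cases heC' : e ∈ C'
    · exact hX.le_of_le ⟨heC', hC' e heC'⟩ hC'X
    have hcX : c ∈ X \ {e} := ⟨hC'X hc, fun h => heC' (h ▸ hc)⟩
    have hcC : G.Reachable ((X \ {e}) \ {c}) (G.src c) (G.tgt c) :=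
      (hC' c hc).mono (Set.sdiff_subset_sdiff_left fun f hf =>
        (⟨hC'X hf, fun h => heC' (h ▸ hf)⟩ : f ∈ X \ {e}))
    exact absurd ((reachable_sdiff_singleton_iff_of_reachable hcC).2 hX.prop.2) (hmin c hcX)

theorem isForest_iff_forall_isCycle (hconn : G.kappa Set.univ = 1) {S : Set E} :
    G.IsForest S ↔ ∀ C, G.IsCycle C → ¬ C ⊆ S := by
  refine ⟨fun hS C hC hCS => ?_, fun h e he hr => ?_⟩
  · obtain ⟨c, hc⟩ := hC.1
    exact hS c (hCS hc) ((hC.isBridgeless hconn c hc).mono (Set.sdiff_subset_sdiff_left hCS))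
  · obtain ⟨C, hCS, -, hC⟩ := exists_isCycle_of_reachable hconn he hr
    exact h C hC hCS

end Cycles

section SpanningTrees

variable [Fintype V] [Finite E]

theorem isSpanningTree_iff (hconn : G.kappa Set.univ = 1) {T : Set E} :
    G.IsSpanningTree T ↔ (∀ C, G.IsCycle C → ¬ C ⊆ T) ∧ G.kappa T = 1 := by
  rw [IsSpanningTree, isForest_iff_forall_isCycle hconn, and_comm]

theorem exists_isSpanningTree (hconn : G.kappa Set.univ = 1) : ∃ T, G.IsSpanningTree T := by
  obtain ⟨T, -, hT⟩ := exists_minimal_le_of_wellFoundedLT (fun T => G.kappa T = 1) _ hconn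
  refine ⟨T, hT.prop, fun e he hr => ?_⟩
  have := hT.le_of_le ((kappa_sdiff_singleton_of_reachable he hr).trans hT.prop) Set.sdiff_subset
  exact (this he).2 rfl

theorem IsSpanningTree.ncard_add_one {T : Set E} (hT : G.IsSpanningTree T) :
    T.ncard + 1 = Fintype.card V := by
  rw [← isForest_iff_kappa_add_ncard.1 hT.2, hT.1, add_comm]

theorem IsSpanningTree.kappa_sdiff {T A : Set E} (hT : G.IsSpanningTree T) (hA : A ⊆ T) :
    G.kappa (T \ A) = A.ncard + 1 := by
  have := isForest_iff_kappa_add_ncard.1 (hT.2.mono (Set.sdiff_subset (t := A)))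
  have := Set.ncard_sdiff_add_ncard_of_subset hA
  have := hT.ncard_add_one
  omega

theorem IsSpanningTree.exchange {T : Set E} (hT : G.IsSpanningTree T) {g f : E} (hg : g ∈ T)
    (hf : f ∉ T) (hk : G.kappa (insert f (T \ {g})) = 1) :
    G.IsSpanningTree (insert f (T \ {g})) := by
  refine ⟨hk, isForest_iff_kappa_add_ncard.2 ?_⟩
  rw [hk, Set.ncard_insert_of_notMem (fun h => hf h.1), Set.ncard_sdiff_singleton_add_one hg,
    add_comm, hT.ncard_add_one]

theorem IsSpanningTree.exchange_of_isCycle (hconn : G.kappa Set.univ = 1) {T : Set E}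
    (hT : G.IsSpanningTree T) {f : E} (hf : f ∉ T) {C : Set E} (hC : G.IsCycle C)
    (hCT : C ⊆ insert f T) {g : E} (hg : g ∈ C) (hgf : g ≠ f) :
    G.IsSpanningTree (insert f (T \ {g})) := by
  have := nonempty_of_kappa_univ hconn
  have hgT : g ∈ T := (hCT hg).resolve_left hgf
  have hCg : C \ {g} ⊆ insert f (T \ {g}) := fun x ⟨hx, hxg⟩ =>
    (hCT hx).imp_right fun hxT => ⟨hxT, hxg⟩
  refine hT.exchange hgT hf (le_antisymm ?_ (one_le_kappa _))
  refine hT.1 ▸ kappa_le_of_forall_reachable fun h hh => ?_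
  rcases eq_or_ne h g with rfl | hhg
  · exact (hC.isBridgeless hconn h hg).mono hCg
  · exact reachable_of_mem (Set.mem_insert_of_mem _ ⟨hh, hhg⟩)

theorem notMem_of_mem_Lact [LinearOrder E] (hconn : G.kappa Set.univ = 1) {T : Set E}
    (hT : G.IsForest T) {e : E} (he : e ∈ G.Lact T) : e ∉ T := by
  obtain ⟨C, hC, -, hCT, -⟩ := he
  intro heT
  exact (isForest_iff_forall_isCycle hconn).1 hT C hC fun f hf =>
    (hCT f hf).elim (fun h => h ▸ heT) id

end SpanningTrees

section Activities

variable [Fintype V] [Fintype E] [LinearOrder E]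

/-- `S` lies in the interval `[T \ Î(T), T ∪ L̂(T)]` of the Boolean lattice of edge sets. -/
def MemActivityInterval (T S : Set E) : Prop :=
  S \ T ⊆ G.Lact T ∧ T \ S ⊆ G.Iact T

theorem exists_isSpanningTree_forall_exchange_le (hconn : G.kappa Set.univ = 1) (w : E → ℤ) :
    ∃ T : Finset E, G.IsSpanningTree ↑T ∧ ∀ g ∈ T, ∀ f ∉ T,
      G.IsSpanningTree (insert f (↑T \ {g})) → w g ≤ w f := by
  obtain ⟨T₀, hT₀⟩ := exists_isSpanningTree hconn
  obtain ⟨T, hT, hmin⟩ := Finset.exists_min_image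
    (Finset.univ.filter fun T : Finset E => G.IsSpanningTree ↑T) (fun T => ∑ e ∈ T, w e)
    ⟨T₀.toFinset, by simpa using hT₀⟩
  refine ⟨T, (Finset.mem_filter.1 hT).2, fun g hg f hf hT' => ?_⟩
  have := hmin (insert f (T.erase g)) (by simpa using hT')
  rw [Finset.sum_insert fun h => hf (Finset.mem_of_mem_erase h),
    ← Finset.sum_erase_add _ _ hg] at this
  linarith

theorem exists_memActivityInterval (hconn : G.kappa Set.univ = 1) (S : Set E) :
    ∃ T : Finset E, G.IsSpanningTree ↑T ∧ G.MemActivityInterval ↑T S := by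
  set r : E → ℤ := fun e => ((Fintype.orderIsoFinOfCardEq E rfl).symm e : ℕ)
  have hr : StrictMono r := fun a b h => by simpa [r] using h
  have hr₀ : ∀ e, 0 ≤ r e := fun e => Int.natCast_nonneg _
  have := nonempty_of_kappa_univ hconn
  obtain ⟨T, hT, hw⟩ := exists_isSpanningTree_forall_exchange_le hconn
    fun e => if e ∈ S then -1 - r e else r e
  refine ⟨T, hT, fun f ⟨hfS, hfT⟩ => ?_, fun e ⟨heT, heS⟩ => ?_⟩
  · have hr' : G.Reachable (insert f ↑T \ {f}) (G.src f) (G.tgt f) := by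
      rw [Set.insert_sdiff_self_of_notMem hfT]
      exact kappa_eq_one_iff.1 hT.1 _ _
    obtain ⟨C, hCT, hfC, hC⟩ := exists_isCycle_of_reachable hconn (Set.mem_insert f _) hr'
    refine ⟨C, hC, hfC, fun g hg => hCT hg, fun g hg => ?_⟩
    rcases eq_or_ne g f with rfl | hgf
    · rfl
    have := hw g ((hCT hg).resolve_left hgf) f hfT (hT.exchange_of_isCycle hconn hfT hC hCT hg hgf)
    rw [if_pos hfS] at this
    split_ifs at this with hgS
    · exact hr.le_iff_le.1 (by omega)
    · linarith [hr₀ f, hr₀ g]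
  · obtain ⟨D, hD, heD, hDT, hDk⟩ :=
      exists_isCut_inter_eq_singleton hconn hT.1 heT (hT.2 e heT)
    have hDT' : ∀ d ∈ D, d ≠ e → d ∉ (T : Set E) := fun d hd hde hdT =>
      hde (hDT.subset ⟨hd, hdT⟩)
    refine ⟨D, hD, heD, hDT', fun d hd => ?_⟩
    rcases eq_or_ne d e with rfl | hde
    · rfl
    have := hw e heT d (hDT' d hd hde) (hT.exchange heT (hDT' d hd hde) (hDk d hd))
    rw [if_neg heS] at this
    split_ifs at this with hdS
    · linarith [hr₀ d, hr₀ e]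
    · exact hr.le_iff_le.1 this

theorem exists_lt_of_memActivityInterval (hconn : G.kappa Set.univ = 1) {S T T' : Set E}
    (hT : G.IsForest T) (hT' : G.kappa T' = 1) (hIT : T \ S ⊆ G.Iact T)
    (hLT' : S \ T' ⊆ G.Lact T') {g : E} (hgT : g ∈ T) (hgT' : g ∉ T') :
    ∃ h ∈ T' \ T, g < h := by
  by_cases hgS : g ∈ S
  · obtain ⟨C, hC, -, hCT', hmin⟩ := hLT' ⟨hgS, hgT'⟩
    obtain ⟨h, hhC, hhT⟩ := Set.not_subset.1 ((isForest_iff_forall_isCycle hconn).1 hT C hC)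
    have hhg : h ≠ g := fun hhg => hhT (hhg ▸ hgT)
    exact ⟨h, ⟨(hCT' h hhC).resolve_left hhg, hhT⟩, (hmin h hhC).lt_of_ne hhg.symm⟩
  · obtain ⟨D, hD, -, hDT, hmin⟩ := hIT ⟨hgT, hgS⟩
    obtain ⟨h, hhD, hhT'⟩ := hD.inter_nonempty hconn hT'
    have hhg : h ≠ g := fun hhg => hgT' (hhg ▸ hhT')
    exact ⟨h, ⟨hhT', hDT h hhD hhg⟩, (hmin h hhD).lt_of_ne hhg.symm⟩

open scoped symmDiff in
theorem eq_of_memActivityInterval (hconn : G.kappa Set.univ = 1) {S : Set E}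
    {T T' : Finset E} (hT : G.IsSpanningTree ↑T) (hT' : G.IsSpanningTree ↑T')
    (hST : G.MemActivityInterval ↑T S) (hST' : G.MemActivityInterval ↑T' S) : T = T' := by
  by_contra hne
  obtain ⟨m, hm, hmax⟩ :=
    Finset.exists_max_image (T ∆ T') id (Finset.symmDiff_nonempty.2 hne)
  rcases Finset.mem_symmDiff.1 hm with ⟨hmT, hmT'⟩ | ⟨hmT', hmT⟩
  · obtain ⟨h, ⟨hhT', hhT⟩, hlt⟩ :=
      exists_lt_of_memActivityInterval hconn hT.2 hT'.1 hST.2 hST'.1 hmT hmT'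
    exact (hmax h (Finset.mem_symmDiff.2 (Or.inr ⟨hhT', hhT⟩))).not_gt hlt
  · obtain ⟨h, ⟨hhT, hhT'⟩, hlt⟩ :=
      exists_lt_of_memActivityInterval hconn hT'.2 hT.1 hST'.2 hST.1 hmT' hmT
    exact (hmax h (Finset.mem_symmDiff.2 (Or.inl ⟨hhT, hhT'⟩))).not_gt hlt

theorem kappa_of_memActivityInterval (hconn : G.kappa Set.univ = 1) {T S : Set E}
    (hT : G.IsSpanningTree T) (hS : G.MemActivityInterval T S) :
    G.kappa S = (T \ S).ncard + 1 := by
  have hreach : ∀ b ∈ S, G.Reachable (T ∩ S) (G.src b) (G.tgt b) := by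
    intro b hbS
    by_cases hbT : b ∈ T
    · exact reachable_of_mem ⟨hbT, hbS⟩
    obtain ⟨C, hC, hbC, hCT, hmin⟩ := hS.1 ⟨hbS, hbT⟩
    -- an edge `a` of `T \ S` on this cycle would be the only edge of its active cut on it
    have hCS : C \ {b} ⊆ T ∩ S := by
      rintro a ⟨haC, hab⟩
      have haT : a ∈ T := (hCT a haC).resolve_left hab
      refine ⟨haT, by_contra fun haS => ?_⟩
      obtain ⟨D, hD, haD, hDT, hDmin⟩ := hS.2 ⟨haT, haS⟩
      refine hC.2.1 D hD (Set.ncard_eq_one.2 ⟨a, Set.eq_singleton_iff_unique_mem.2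
        ⟨⟨haD, haC⟩, fun x ⟨hxD, hxC⟩ => by_contra fun hxa => ?_⟩⟩)
      rcases hCT x hxC with rfl | hxT
      · exact hbT (le_antisymm (hmin a haC) (hDmin x hxD) ▸ haT)
      · exact hDT x hxD hxa hxT
    exact (hC.isBridgeless hconn b hbC).mono hCS
  have hk : G.kappa S = G.kappa (T ∩ S) :=
    le_antisymm (kappa_anti Set.inter_subset_right) (kappa_le_of_forall_reachable hreach)
  rw [hk, ← Set.sdiff_sdiff_right_self, hT.kappa_sdiff Set.sdiff_subset]

theorem corank_nullity_of_memActivityInterval (hconn : G.kappa Set.univ = 1)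
    {T S : Finset E} (hT : G.IsSpanningTree ↑T) (hS : G.MemActivityInterval ↑T ↑S) :
    G.kappa ↑S - G.kappa Set.univ = (T \ S).card ∧
      S.card + G.kappa ↑S - Fintype.card V = (S \ T).card := by
  have hk := kappa_of_memActivityInterval hconn hT hS
  have hn := hT.ncard_add_one
  rw [← Finset.coe_sdiff, Set.ncard_coe_finset] at hk
  rw [Set.ncard_coe_finset] at hn
  have := Finset.card_sdiff_add_card_inter S T
  have := Finset.card_sdiff_add_card_inter T S
  rw [Finset.inter_comm] at this
  omega

theorem sum_memActivityInterval (hconn : G.kappa Set.univ = 1) {T : Finset E}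
    (hT : G.IsSpanningTree ↑T) {R : Type*} [CommRing R] (x y : R) :
    ∑ S ∈ Finset.univ.filter fun S : Finset E => G.MemActivityInterval ↑T ↑S,
        (x - 1) ^ (G.kappa ↑S - G.kappa Set.univ) *
          (y - 1) ^ (S.card + G.kappa ↑S - Fintype.card V) =
      x ^ (G.Iact ↑T).ncard * y ^ (G.Lact ↑T).ncard := by
  have hI : (G.Iact ↑T).toFinset ⊆ T := fun e he =>
    mem_of_mem_Iact hconn hT.1 (Set.mem_toFinset.1 he)
  have hL : Disjoint (G.Lact ↑T).toFinset T := Finset.disjoint_left.2 fun e he =>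
    notMem_of_mem_Lact hconn hT.2 (Set.mem_toFinset.1 he)
  calc _ = ∑ S with S \ T ⊆ (G.Lact ↑T).toFinset ∧ T \ S ⊆ (G.Iact ↑T).toFinset,
        (x - 1) ^ (T \ S).card * (y - 1) ^ (S \ T).card := by
        refine Finset.sum_congr (Finset.filter_congr fun S _ => ?_) fun S hS => ?_
        · simp only [MemActivityInterval, Set.subset_toFinset, Finset.coe_sdiff]
        · have hS := (Finset.mem_filter.1 hS).2
          simp only [Set.subset_toFinset, Finset.coe_sdiff] at hS
          obtain ⟨h₁, h₂⟩ := corank_nullity_of_memActivityInterval hconn hT hS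
          rw [h₁, h₂]
    _ = _ := by
        rw [Finset.sum_pow_card_sdiff_mul_pow_card_sdiff hI hL, sub_add_cancel, sub_add_cancel,
          Set.ncard_eq_toFinset_card', Set.ncard_eq_toFinset_card']

end Activities

end RefGraph

/-- Tutte's spanning tree activities expansion: for a connected
graph `G`, `T_G(x̂, ŷ) = Σ_T x̂^{|Î(T)|} ŷ^{|L̂(T)|}` over spanning trees `T`
(spanning subgraphs with no cycle and a single connected component). -/
theorem tutte_spanning_tree_expansion {V E : Type} [Fintype V] [Fintype E]
    [LinearOrder E] (G : RefGraph V E) (hconn : G.kappa Set.univ = 1)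
    (R : Type) [CommRing R] (x y : R) :
    G.tutte R x y =
      ∑ T : Finset E,
        if (∀ C : Set E, G.IsCycle C → ¬ C ⊆ ↑T) ∧ G.kappa ↑T = 1 then
          x ^ (G.Iact ↑T).ncard * y ^ (G.Lact ↑T).ncard
        else 0 := by
  choose τ hτ using fun S : Finset E => RefGraph.exists_memActivityInterval hconn ↑S
  rw [RefGraph.tutte, ← Finset.sum_fiberwise Finset.univ τ]
  refine Finset.sum_congr rfl fun T _ => ?_
  by_cases hT : G.IsSpanningTree ↑T
  · rw [if_pos ((RefGraph.isSpanningTree_iff hconn).1 hT),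
      ← RefGraph.sum_memActivityInterval hconn hT]
    refine Finset.sum_congr (Finset.filter_congr fun S _ => ⟨fun h => h ▸ (hτ S).2,
      fun h => RefGraph.eq_of_memActivityInterval hconn (hτ S).1 hT (hτ S).2 h⟩) fun _ _ => rfl
  · rw [if_neg (mt (RefGraph.isSpanningTree_iff hconn).2 hT)]
    exact Finset.sum_eq_zero fun S hS => absurd ((Finset.mem_filter.1 hS).2 ▸ (hτ S).1) hT
end

section
/- Let G be a graph with total edge order and reference orientation, and suppose the maximum edge e of G is a loop. Then for any fourientation O of G: I^o(O) = I^o(O/e) and I^u(O) = I^u(O/e); if e is oriented in O then L^o(O) = {e} ∪ L^o(O−e) and L^b(O) = L^b(O−e); if e is bioriented in O then L^o(O) = L^o(O−e) and L^b(O) = {e} ∪ L^b(O−e). -/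
open scoped Classical

/-
A loop `e` crosses no vertex partition, so it lies in no cut, and deleting it changes no
component count. Hence the cuts (and potential cuts) of `G` are exactly those of `G − e`, and
also those of `G / e`, which is `G − e` with its vertices renamed since contracting a loop
identifies nothing. The loop `{e}` alone meets every cut evenly, so by minimality it is the only
cycle through `e`; every other cycle of `G` is a cycle of `G − e`. The activities of edges other
than `e` therefore agree on both sides, `e` is never cut active, and `{e}` is a potential cycle
of `O` (resp. of `O \ {e^{σ_b(e)}}`) exactly when `e` is oriented or bioriented (resp. bioriented).
-/

def quotEquivOfMkEq {α : Type*} (r s : α → α → Prop)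
    (hrs : ∀ a b, r a b → Quot.mk s a = Quot.mk s b)
    (hsr : ∀ a b, s a b → Quot.mk r a = Quot.mk r b) : Quot r ≃ Quot s where
  toFun := Quot.lift (Quot.mk s) hrs
  invFun := Quot.lift (Quot.mk r) hsr
  left_inv q := Quot.inductionOn q fun _ => rfl
  right_inv q := Quot.inductionOn q fun _ => rfl

theorem Function.Injective.minimalNonempty_image_iff {α β : Type*} {f : α → β}
    (hf : Function.Injective f) {P : Set β → Prop} {Q : Set α → Prop}
    (hPQ : ∀ s, P (f '' s) ↔ Q s) (s : Set α) :
    ((f '' s).Nonempty ∧ P (f '' s) ∧ ∀ t ⊂ f '' s, t.Nonempty → ¬ P t) ↔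
      (s.Nonempty ∧ Q s ∧ ∀ t ⊂ s, t.Nonempty → ¬ Q t) := by
  rw [Set.image_nonempty, hPQ]
  refine and_congr_right fun _ => and_congr_right fun _ =>
    ⟨fun h t hts ht => ?_, fun h t hts ht => ?_⟩
  · rw [← hPQ]
    exact h _ (hf.image_strictMono hts) (ht.image f)
  · obtain ⟨t, rfl⟩ := Set.subset_range_iff_exists_image_eq.1
      (hts.subset.trans (Set.image_subset_range f s))
    rw [hPQ]
    exact h t ⟨(Set.image_subset_image_iff hf).1 hts.1, fun hst => hts.2 (Set.image_mono hst)⟩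
      (Set.image_nonempty.1 ht)

section SubtypeNe

variable {E : Type} {e : E}

theorem exists_image_val_eq_of_notMem {C : Set E} (he : e ∉ C) :
    ∃ C' : Set {x // x ≠ e}, Subtype.val '' C' = C := by
  refine Set.subset_range_iff_exists_image_eq.1 ?_
  rw [Subtype.range_coe_subtype]
  exact fun x hx hxe => he (hxe ▸ hx)

theorem notMem_image_val (T : Set {x // x ≠ e}) : e ∉ Subtype.val '' T :=
  fun ⟨x, _, hx⟩ => x.2 hx

theorem eq_image_val_of_forall_mem_iff {S : Set E} {T : Set {x // x ≠ e}} (he : e ∉ S)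
    (h : ∀ f : {x // x ≠ e}, f.1 ∈ S ↔ f ∈ T) : S = Subtype.val '' T := by
  ext x
  by_cases hx : x = e
  · subst hx
    exact iff_of_false he (notMem_image_val T)
  · exact (h ⟨x, hx⟩).trans Subtype.val_injective.mem_set_image.symm

theorem eq_singleton_union_image_val_of_forall_mem_iff {S : Set E} {T : Set {x // x ≠ e}}
    (he : e ∈ S) (h : ∀ f : {x // x ≠ e}, f.1 ∈ S ↔ f ∈ T) :
    S = {e} ∪ Subtype.val '' T := by
  rw [← Set.union_sdiff_cancel (Set.singleton_subset_iff.2 he),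
    eq_image_val_of_forall_mem_iff (T := T) (Set.notMem_sdiff_of_mem (Set.mem_singleton e))
      fun f => ?_]
  rw [Set.mem_sdiff, Set.mem_singleton_iff, ← h f]
  exact and_iff_left f.2

theorem exists_isLeast_image_val_iff [LinearOrder E] {P : Set E → Prop}
    {Q : Set {x // x ≠ e} → Prop} (hPQ : ∀ C', P (Subtype.val '' C') ↔ Q C')
    (f : {x // x ≠ e}) (havoid : ∀ C, P C → f.1 ∈ C → e ∉ C) :
    (∃ C, P C ∧ IsLeast C f.1) ↔ ∃ C', Q C' ∧ IsLeast C' f := by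
  constructor
  · rintro ⟨C, hP, hf, hmin⟩
    obtain ⟨C', rfl⟩ := exists_image_val_eq_of_notMem (havoid C hP hf)
    exact ⟨C', (hPQ C').1 hP, Subtype.val_injective.mem_set_image.1 hf,
      fun g hg => hmin (Set.mem_image_of_mem _ hg)⟩
  · rintro ⟨C', hQ, hf, hmin⟩
    exact ⟨_, (hPQ C').2 hQ, Set.mem_image_of_mem _ hf,
      Set.forall_mem_image.2 fun g hg => hmin hg⟩

end SubtypeNe

namespace RefGraph

variable {V V' E : Type} (G : RefGraph V E)

def mapVert (φ : V → V') : RefGraph V' E :=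
  ⟨fun f => φ (G.src f), fun f => φ (G.tgt f)⟩

theorem kappa_mapVert (φ : V ≃ V') (S : Set E) : (G.mapVert φ).kappa S = G.kappa S := by
  refine (Nat.card_congr (Quot.congr φ fun a b => ?_)).symm
  simp only [step, mapVert, φ.apply_eq_iff_eq]

theorem potCut_mapVert_iff (φ : V ≃ V') (F : E → Bool × Bool) (C : Set E) :
    (G.mapVert φ).PotCut F C ↔ G.PotCut F C := by
  have hcut : (G.mapVert φ).IsCut C ↔ G.IsCut C := by
    simp only [IsCut, kappa_mapVert]
  refine and_congr hcut ⟨fun ⟨U', hU'⟩ => ⟨φ ⁻¹' U', hU'⟩, fun ⟨U, hU⟩ => ?_⟩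
  obtain ⟨U', rfl⟩ := Set.preimage_surjective.2 φ.injective U
  exact ⟨U', hU⟩

section Loop

variable {e : E}

theorem not_crossing_of_loop (hloop : G.src e = G.tgt e) (U : Set V) : ¬ G.crossing U e := by
  simp [crossing, hloop]

theorem ohead_eq_otail_of_loop (hloop : G.src e = G.tgt e) (O : E → Bool) :
    G.ohead O e = G.otail O e := by
  cases O e <;> simp [ohead, otail, *]

theorem kappa_insert_of_loop (hloop : G.src e = G.tgt e) (S : Set E) :
    G.kappa (insert e S) = G.kappa S := by
  refine Nat.card_congr (quotEquivOfMkEq _ _ ?_ fun a b ⟨f, hf, h⟩ =>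
    Quot.sound ⟨f, Set.mem_insert_of_mem e hf, h⟩)
  rintro a b ⟨f, rfl | hf, h⟩
  · rcases h with ⟨rfl, rfl⟩ | ⟨rfl, rfl⟩ <;> rw [hloop]
  · exact Quot.sound ⟨f, hf, h⟩

theorem kappa_del (S' : Set {f : E // f ≠ e}) :
    (G.del e).kappa S' = G.kappa (Subtype.val '' S') := by
  unfold kappa
  congr 2
  ext a b
  simp [step, del]

theorem kappa_del_compl (hloop : G.src e = G.tgt e) (S' : Set {f : E // f ≠ e}) :
    (G.del e).kappa S'ᶜ = G.kappa (Subtype.val '' S')ᶜ := by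
  rw [Subtype.val_injective.compl_image_eq, Subtype.range_coe_subtype, Set.compl_ne_eq_singleton,
    Set.union_singleton, kappa_insert_of_loop G hloop, kappa_del]

theorem kappa_del_univ (hloop : G.src e = G.tgt e) :
    (G.del e).kappa Set.univ = G.kappa Set.univ := by
  simpa using G.kappa_del_compl hloop ∅

theorem isCut_image_val_iff (hloop : G.src e = G.tgt e) (C' : Set {f : E // f ≠ e}) :
    G.IsCut (Subtype.val '' C') ↔ (G.del e).IsCut C' := by
  refine Subtype.val_injective.minimalNonempty_image_iff
    (P := fun C => G.kappa Cᶜ > G.kappa Set.univ)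
    (Q := fun C' => (G.del e).kappa C'ᶜ > (G.del e).kappa Set.univ) (fun s => ?_) C'
  rw [← kappa_del_compl G hloop, ← kappa_del_univ G hloop]

theorem notMem_of_isCut (hloop : G.src e = G.tgt e) {C : Set E} (hC : G.IsCut C) : e ∉ C := by
  intro he
  obtain ⟨-, hgt, hmin⟩ := hC
  have hkappa : G.kappa (C \ {e})ᶜ = G.kappa Cᶜ := by
    rw [Set.compl_sdiff, Set.singleton_union, kappa_insert_of_loop G hloop]
  rcases (C \ {e}).eq_empty_or_nonempty with hempty | hne
  · rw [hempty, Set.compl_empty] at hkappa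
    exact hgt.ne hkappa
  · exact hmin _ (Set.sdiff_singleton_ssubset.2 he) hne (hkappa ▸ hgt)

theorem forall_isCut_iff_forall_image_val (hloop : G.src e = G.tgt e) {R : Set E → Prop} :
    (∀ C, G.IsCut C → R C) ↔
      ∀ C' : Set {f : E // f ≠ e}, (G.del e).IsCut C' → R (Subtype.val '' C') := by
  refine ⟨fun h C' hC' => h _ ((G.isCut_image_val_iff hloop C').2 hC'), fun h C hC => ?_⟩
  obtain ⟨C', rfl⟩ := exists_image_val_eq_of_notMem (G.notMem_of_isCut hloop hC)
  exact h C' ((G.isCut_image_val_iff hloop C').1 hC)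

theorem isCycle_image_val_iff (hloop : G.src e = G.tgt e) (C' : Set {f : E // f ≠ e}) :
    G.IsCycle (Subtype.val '' C') ↔ (G.del e).IsCycle C' := by
  refine Subtype.val_injective.minimalNonempty_image_iff
    (P := fun C => ∀ Cu, G.IsCut Cu → (Cu ∩ C).ncard ≠ 1)
    (Q := fun C' => ∀ Cu, (G.del e).IsCut Cu → (Cu ∩ C').ncard ≠ 1) (fun s => ?_) C'
  rw [G.forall_isCut_iff_forall_image_val hloop]
  simp only [← Set.image_inter Subtype.val_injective,
    Set.ncard_image_of_injective _ Subtype.val_injective]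

theorem isCycle_singleton_of_loop (hloop : G.src e = G.tgt e) : G.IsCycle {e} := by
  refine ⟨Set.singleton_nonempty e, fun Cu hCu => ?_, fun C hC hne => ?_⟩
  · rw [Set.inter_singleton_eq_empty.2 (G.notMem_of_isCut hloop hCu), Set.ncard_empty]
    exact zero_ne_one
  · exact absurd (Set.ssubset_singleton_iff.1 hC) hne.ne_empty

theorem eq_singleton_of_isCycle_of_mem (hloop : G.src e = G.tgt e) {C : Set E}
    (hC : G.IsCycle C) (he : e ∈ C) : C = {e} := by
  by_contra hne
  exact hC.2.2 {e} ((Set.singleton_subset_iff.2 he).ssubset_of_ne (Ne.symm hne))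
    (Set.singleton_nonempty e) (G.isCycle_singleton_of_loop hloop).2.1

def contrVertEquiv (hloop : G.src e = G.tgt e) :
    V ≃ Quot (fun a b => a = G.src e ∧ b = G.tgt e) where
  toFun := Quot.mk _
  invFun := Quot.lift id fun _ _ h => h.1.trans (hloop.trans h.2.symm)
  left_inv _ := rfl
  right_inv q := Quot.inductionOn q fun _ => rfl

theorem contr_eq_mapVert (hloop : G.src e = G.tgt e) :
    G.contr e = (G.del e).mapVert (G.contrVertEquiv hloop) :=
  rfl

theorem potCut_image_val_iff (hloop : G.src e = G.tgt e) (F : E → Bool × Bool)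
    (C' : Set {f : E // f ≠ e}) :
    G.PotCut F (Subtype.val '' C') ↔ (G.del e).PotCut (fun f => F f.1) C' := by
  refine and_congr (G.isCut_image_val_iff hloop C') (exists_congr fun U => and_congr ?_
    Set.forall_mem_image)
  refine ⟨fun h f => Subtype.val_injective.mem_set_image.symm.trans (h f.1), fun h x => ?_⟩
  by_cases hx : x = e
  · subst hx
    exact iff_of_false (notMem_image_val C') (G.not_crossing_of_loop hloop U)
  · exact Subtype.val_injective.mem_set_image.trans (h ⟨x, hx⟩)

theorem potCut_contr_iff (hloop : G.src e = G.tgt e) (F : {f : E // f ≠ e} → Bool × Bool)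
    (C' : Set {f : E // f ≠ e}) :
    (G.contr e).PotCut F C' ↔ (G.del e).PotCut F C' := by
  rw [G.contr_eq_mapVert hloop, potCut_mapVert_iff]

theorem ncard_sep_image_val (C' : Set {f : E // f ≠ e}) (p : E → Prop) :
    {x ∈ Subtype.val '' C' | p x}.ncard = {f ∈ C' | p f.1}.ncard := by
  rw [← Set.ncard_image_of_injective _ Subtype.val_injective]
  congr 1
  ext x
  simp

theorem potCycle_image_val_iff (hloop : G.src e = G.tgt e) (F : E → Bool × Bool)
    (dir : E → Bool) (C' : Set {f : E // f ≠ e}) :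
    G.PotCycle F (Subtype.val '' C') dir ↔
      (G.del e).PotCycle (fun f => F f.1) C' (fun f => dir f.1) := by
  refine and_congr (G.isCycle_image_val_iff hloop C') (and_congr (forall_congr' fun v => ?_)
    Set.forall_mem_image)
  rw [ncard_sep_image_val, ncard_sep_image_val]
  rfl

theorem potCycle_singleton_of_loop (hloop : G.src e = G.tgt e) (F : E → Bool × Bool)
    (dir : E → Bool) (hdir : (if dir e then (F e).1 else (F e).2) = true) :
    G.PotCycle F {e} dir := by
  refine ⟨G.isCycle_singleton_of_loop hloop, fun v => ?_, fun f hf => ?_⟩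
  · congr 1
    ext x
    refine and_congr_right fun hx => ?_
    rw [Set.mem_singleton_iff.1 hx, G.ohead_eq_otail_of_loop hloop]
  · rwa [Set.mem_singleton_iff.1 hf]

theorem addDir_comp_val [DecidableEq E] (F : E → Bool × Bool) (f : {x : E // x ≠ e})
    (d : Bool) :
    (fun g : {x : E // x ≠ e} => addDir F f.1 d g.1) = addDir (fun g => F g.1) f d :=
  Function.update_comp_eq_of_injective' F Subtype.val_injective f _

theorem remDir_comp_val [DecidableEq E] (F : E → Bool × Bool) (f : {x : E // x ≠ e})
    (d : Bool) :
    (fun g : {x : E // x ≠ e} => remDir F f.1 d g.1) = remDir (fun g => F g.1) f d :=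
  Function.update_comp_eq_of_injective' F Subtype.val_injective f _

theorem exists_potCycle_image_val_iff (hloop : G.src e = G.tgt e) (F : E → Bool × Bool)
    (C' : Set {f : E // f ≠ e}) :
    (∃ dir, G.PotCycle F (Subtype.val '' C') dir) ↔
      ∃ dir, (G.del e).PotCycle (fun f => F f.1) C' dir := by
  simp only [G.potCycle_image_val_iff hloop]
  exact Subtype.val_injective.surjective_comp_right.exists.symm

theorem notMem_of_isCycle_of_ne (hloop : G.src e = G.tgt e) {C : Set E} (hC : G.IsCycle C)
    {f : E} (hf : f ∈ C) (hfe : f ≠ e) : e ∉ C :=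
  fun he => hfe (by rwa [G.eq_singleton_of_isCycle_of_mem hloop hC he] at hf)

variable [LinearOrder E]

theorem val_mem_Io_iff (hloop : G.src e = G.tgt e) (F : E → Bool × Bool)
    (f : {x : E // x ≠ e}) : f.1 ∈ G.Io F ↔ f ∈ (G.contr e).Io (fun g => F g.1) :=
  and_congr_right fun _ => exists_isLeast_image_val_iff
    (fun C' => (G.potCut_image_val_iff hloop F C').trans (G.potCut_contr_iff hloop _ C').symm) f
    fun _ hC _ => G.notMem_of_isCut hloop hC.1

theorem val_mem_Iu_iff (hloop : G.src e = G.tgt e) (σu : E → Bool) (F : E → Bool × Bool)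
    (f : {x : E // x ≠ e}) :
    f.1 ∈ G.Iu σu F ↔ f ∈ (G.contr e).Iu (fun g => σu g.1) (fun g => F g.1) :=
  and_congr_right fun _ => exists_isLeast_image_val_iff
    (fun C' => by
      rw [G.potCut_image_val_iff hloop, addDir_comp_val, G.potCut_contr_iff hloop]
      exact Iff.rfl) f
    fun _ hC _ => G.notMem_of_isCut hloop hC.1

theorem val_mem_Lo_iff (hloop : G.src e = G.tgt e) (F : E → Bool × Bool)
    (f : {x : E // x ≠ e}) : f.1 ∈ G.Lo F ↔ f ∈ (G.del e).Lo (fun g => F g.1) := by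
  simp only [Lo, Set.mem_ofPred_eq, exists_and_right]
  exact and_congr_right fun _ => exists_isLeast_image_val_iff
    (G.exists_potCycle_image_val_iff hloop F) f
    fun _ ⟨_, hC⟩ hf => G.notMem_of_isCycle_of_ne hloop hC.1 hf f.2

theorem val_mem_Lb_iff (hloop : G.src e = G.tgt e) (σb : E → Bool) (F : E → Bool × Bool)
    (f : {x : E // x ≠ e}) :
    f.1 ∈ G.Lb σb F ↔ f ∈ (G.del e).Lb (fun g => σb g.1) (fun g => F g.1) := by
  simp only [Lb, Set.mem_ofPred_eq, exists_and_right]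
  exact and_congr_right fun _ => exists_isLeast_image_val_iff
    (fun C' => by rw [G.exists_potCycle_image_val_iff hloop, remDir_comp_val]; exact Iff.rfl) f
    fun _ ⟨_, hC⟩ hf => G.notMem_of_isCycle_of_ne hloop hC.1 hf f.2

theorem loop_notMem_Io (hloop : G.src e = G.tgt e) (F : E → Bool × Bool) : e ∉ G.Io F :=
  fun ⟨_, _, hC, he, _⟩ => G.notMem_of_isCut hloop hC.1 he

theorem loop_notMem_Iu (hloop : G.src e = G.tgt e) (σu : E → Bool) (F : E → Bool × Bool) :
    e ∉ G.Iu σu F :=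
  fun ⟨_, _, hC, he, _⟩ => G.notMem_of_isCut hloop hC.1 he

theorem loop_mem_Lo_iff (hloop : G.src e = G.tgt e) (F : E → Bool × Bool) :
    e ∈ G.Lo F ↔ (F e).1 ≠ (F e).2 := by
  refine ⟨And.left, fun hor => ⟨hor, {e}, fun _ => (F e).1,
    G.potCycle_singleton_of_loop hloop F _ ?_, rfl, by simp⟩⟩
  cases h : (F e).1 <;> simp_all

theorem loop_mem_Lb_iff (hloop : G.src e = G.tgt e) (σb : E → Bool) (F : E → Bool × Bool) :
    e ∈ G.Lb σb F ↔ F e = (true, true) := by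
  refine ⟨And.left, fun hbi => ⟨hbi, {e}, fun _ => !σb e,
    G.potCycle_singleton_of_loop hloop _ _ ?_, rfl, by simp⟩⟩
  cases σb e <;> simp [remDir, hbi]

end Loop

end RefGraph

theorem loop_lemma_general {V E : Type} [LinearOrder E]
    (G : RefGraph V E) (σu σb : E → Bool) (e : E)
    (hloop : G.src e = G.tgt e) (F : E → Bool × Bool) :
    G.Io F = Subtype.val '' (G.contr e).Io (fun f => F f.1) ∧
    G.Iu σu F =
      Subtype.val '' (G.contr e).Iu (fun f => σu f.1) (fun f => F f.1) ∧
    ((F e).1 ≠ (F e).2 →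
      G.Lo F = {e} ∪ Subtype.val '' (G.del e).Lo (fun f => F f.1) ∧
      G.Lb σb F =
        Subtype.val '' (G.del e).Lb (fun f => σb f.1) (fun f => F f.1)) ∧
    (F e = (true, true) →
      G.Lo F = Subtype.val '' (G.del e).Lo (fun f => F f.1) ∧
      G.Lb σb F =
        {e} ∪ Subtype.val '' (G.del e).Lb (fun f => σb f.1) (fun f => F f.1)) := by
  have hLo := G.val_mem_Lo_iff hloop F
  have hLb := G.val_mem_Lb_iff hloop σb F
  have hLoe := G.loop_mem_Lo_iff hloop F
  have hLbe := G.loop_mem_Lb_iff hloop σb F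
  refine ⟨eq_image_val_of_forall_mem_iff (G.loop_notMem_Io hloop F) (G.val_mem_Io_iff hloop F),
    eq_image_val_of_forall_mem_iff (G.loop_notMem_Iu hloop σu F) (G.val_mem_Iu_iff hloop σu F),
    fun hor => ⟨eq_singleton_union_image_val_of_forall_mem_iff (hLoe.2 hor) hLo,
      eq_image_val_of_forall_mem_iff (fun he => hor (by rw [hLbe.1 he])) hLb⟩,
    fun hbi => ⟨eq_image_val_of_forall_mem_iff (fun he => hLoe.1 he (by rw [hbi])) hLo,
      eq_singleton_union_image_val_of_forall_mem_iff (hLbe.2 hbi) hLb⟩⟩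

/-- loop case: if the maximum edge `e` is a loop then, for any
fourientation `O`: `I^o(O) = I^o(O/e)` and `I^u(O) = I^u(O/e)`; if `e` is
oriented then `L^o(O) = {e} ∪ L^o(O−e)` and `L^b(O) = L^b(O−e)`; if `e` is
bioriented then `L^o(O) = L^o(O−e)` and `L^b(O) = {e} ∪ L^b(O−e)`. -/
theorem loop_lemma {V E : Type} [Fintype V] [Fintype E] [LinearOrder E]
    (G : RefGraph V E) (σu σb : E → Bool) (e : E)
    (hmax : ∀ f : E, f ≤ e) (hloop : G.src e = G.tgt e) (F : E → Bool × Bool) :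
    G.Io F = Subtype.val '' (G.contr e).Io (fun f => F f.1) ∧
    G.Iu σu F =
      Subtype.val '' (G.contr e).Iu (fun f => σu f.1) (fun f => F f.1) ∧
    ((F e).1 ≠ (F e).2 →
      G.Lo F = {e} ∪ Subtype.val '' (G.del e).Lo (fun f => F f.1) ∧
      G.Lb σb F =
        Subtype.val '' (G.del e).Lb (fun f => σb f.1) (fun f => F f.1)) ∧
    (F e = (true, true) →
      G.Lo F = Subtype.val '' (G.del e).Lo (fun f => F f.1) ∧
      G.Lb σb F =
        {e} ∪ Subtype.val '' (G.del e).Lb (fun f => σb f.1) (fun f => F f.1)) :=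
  loop_lemma_general G σu σb e hloop F
end
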